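/- Let γ = (θ, σ²), and define V_{γ₀} as the block-diagonal matrix with blocks σ*^{-2} V_{θ₀} and σ*^{-4}/2, where V_{θ₀} = ∫₀¹ ( (∂f_{θ₀}/∂θ)(t)ᵀ (∂f_{θ₀}/∂θ)(t) − ∂/∂θ [ (∂f_θ/∂θ)(t)ᵀ (f₀(t) − f_{θ₀}(t)) ]|_{θ=θ₀} ) g(t) dt. If f_θ is twice continuously differentiable in θ and f₀, f_θ are continuous in t, then the second-order Taylor expansion of the misspecified Kullback–Leibler function γ ↦ −P₀ log(p_γ/p_{γ₀}) around γ₀ satisfies −P₀ log(p_γ/p_{γ₀}) = (1/2)(γ − γ₀)ᵀ V_{γ₀} (γ − γ₀) + o(‖γ − γ₀‖²) as γ → γ₀, where γ₀ = (θ₀, σ*²) satisfies ∫₀¹ (∂f_{θ₀}/∂θ)(t)ᵀ (f₀(t) − f_{θ₀}(t)) g(t) dt = 0 and σ*² = σ₀² + ∫₀¹ |f₀(t) − f_{θ₀}(t)|² g(t) dt. -/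

import Mathlib

/-!
Write `F θ = ∫₀¹ (f₀ - f_θ)² g`. With `σ*² = σ₀² + F θ₀`, the closed form of the Kullback–Leibler
function splits as
`KL(θ, s) = [½ log s + σ*²/(2s) - ½ log σ*² - ½] + (F θ - F θ₀)/(2s)`.
The bracket is a function of `s` alone with a critical point at `σ*²` and second derivative
`1/(2σ*⁴)` there. For the second summand, Taylor-expand `θ ↦ (f₀ t - f_θ t)²` to second order around
`θ₀`. The remainder is `o(‖θ - θ₀‖²)` uniformly in `t ∈ [0, 1]`, because the Hessian is jointly
continuous and `[0, 1]` is compact, so the expansion survives integration against `g`. The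
first-order term integrates to zero by the stationarity of `θ₀`. Replacing `1/(2s)` by `1/(2σ*²)`
in front of the quadratic term only costs `O(‖θ - θ₀‖²) · o(1)`.
-/

open Set Asymptotics Filter Topology

section Taylor

variable {E F : Type*} [NormedAddCommGroup E] [NormedSpace ℝ E] [NormedAddCommGroup F]
  [NormedSpace ℝ F]

theorem norm_sub_taylor_two_le_of_segment {φ : E → F} {φ' : E → E →L[ℝ] F}
    {φ'' : E → E →L[ℝ] E →L[ℝ] F} {x₀ x : E} {ε : ℝ}
    (hφ : ∀ y ∈ segment ℝ x₀ x, HasFDerivAt φ (φ' y) y)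
    (hφ' : ∀ y ∈ segment ℝ x₀ x, HasFDerivAt φ' (φ'' y) y)
    (hsymm : ∀ u v, φ'' x₀ u v = φ'' x₀ v u)
    (hε : ∀ y ∈ segment ℝ x₀ x, ‖φ'' y - φ'' x₀‖ ≤ ε) :
    ‖φ x - φ x₀ - φ' x₀ (x - x₀) - (2 : ℝ)⁻¹ • φ'' x₀ (x - x₀) (x - x₀)‖ ≤
      ε * ‖x - x₀‖ ^ 2 := by
  set A := φ'' x₀
  set S := segment ℝ x₀ x
  have hS : S ⊆ Metric.closedBall x₀ ‖x - x₀‖ :=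
    (convex_closedBall _ _).segment_subset (Metric.mem_closedBall_self (norm_nonneg _))
      (by rw [Metric.mem_closedBall, dist_eq_norm])
  have hA : ∀ y, HasFDerivAt (fun w => A (w - x₀)) A y := fun y => by
    simpa [Function.comp_def] using A.hasFDerivAt.comp y ((hasFDerivAt_id y).sub_const x₀)
  have hquad : ∀ y, HasFDerivAt (fun w => (2 : ℝ)⁻¹ • A (w - x₀) (w - x₀)) (A (y - x₀)) y := by
    intro y
    refine (((hA y).clm_apply ((hasFDerivAt_id y).sub_const x₀)).const_smul (2 : ℝ)⁻¹)
      |>.congr_fderiv ?_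
    ext v
    simp only [FunLike.coe_smul, FunLike.coe_add, Pi.add_apply, Pi.smul_apply,
      ContinuousLinearMap.comp_id, ContinuousLinearMap.flip_apply, id, ← hsymm v]
    module
  -- the first derivative of the Taylor remainder is itself a first-order remainder of `φ'`
  have hinner : ∀ y ∈ S, ‖φ' y - φ' x₀ - A (y - x₀)‖ ≤ ε * ‖x - x₀‖ := by
    intro y hy
    have := (convex_segment x₀ x).norm_image_sub_le_of_norm_hasFDerivWithin_le
      (f := fun w => φ' w - A (w - x₀))
      (fun z hz => ((hφ' z hz).sub (hA z)).hasFDerivWithinAt) hε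
      (left_mem_segment ℝ x₀ x) hy
    rw [sub_self, map_zero, sub_zero, sub_right_comm] at this
    calc ‖φ' y - φ' x₀ - A (y - x₀)‖ ≤ ε * ‖y - x₀‖ := this
      _ ≤ ε * ‖x - x₀‖ := by
        gcongr
        · exact (norm_nonneg (φ'' x₀ - A)).trans (hε x₀ (left_mem_segment ℝ x₀ x))
        · simpa [dist_eq_norm] using hS hy
  have := (convex_segment x₀ x).norm_image_sub_le_of_norm_hasFDerivWithin_le
    (f := fun w => φ w - φ' x₀ (w - x₀) - (2 : ℝ)⁻¹ • A (w - x₀) (w - x₀))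
    (fun y hy => (((hφ y hy).sub (((φ' x₀).hasFDerivAt.comp y
      ((hasFDerivAt_id y).sub_const x₀)))).sub (hquad y)).hasFDerivWithinAt) hinner
    (left_mem_segment ℝ x₀ x) (right_mem_segment ℝ x₀ x)
  simpa [sq, mul_assoc, sub_right_comm _ (φ x₀)] using this

theorem isLittleO_sub_taylor_two_of_tendstoUniformlyOn {T : Type*} {s : Set T}
    {φ : E → T → F} {φ' : E → T → E →L[ℝ] F} {φ'' : E → T → E →L[ℝ] E →L[ℝ] F} {x₀ : E}
    (hφ : ∀ x t, HasFDerivAt (φ · t) (φ' x t) x) (hφ' : ∀ x t, HasFDerivAt (φ' · t) (φ'' x t) x)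
    (hφ'' : TendstoUniformlyOn φ'' (φ'' x₀) (𝓝 x₀) s) :
    (fun q : E × T => φ q.1 q.2 - φ x₀ q.2 - φ' x₀ q.2 (q.1 - x₀)
        - (2 : ℝ)⁻¹ • φ'' x₀ q.2 (q.1 - x₀) (q.1 - x₀))
      =o[𝓝 x₀ ×ˢ 𝓟 s] fun q => ‖q.1 - x₀‖ ^ 2 := by
  refine isLittleO_iff.2 fun c hc => ?_
  obtain ⟨δ, hδ, hball⟩ :=
    Metric.eventually_nhds_iff_ball.1
      ((Metric.tendstoUniformlyOn_iff (α := E →L[ℝ] E →L[ℝ] F)).1 hφ'' c hc)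
  rw [eventually_prod_principal_iff]
  filter_upwards [Metric.ball_mem_nhds x₀ hδ] with x hx t ht
  have hseg : segment ℝ x₀ x ⊆ Metric.ball x₀ δ :=
    (convex_ball x₀ δ).segment_subset (Metric.mem_ball_self hδ) hx
  rw [norm_pow, norm_norm]
  exact norm_sub_taylor_two_le_of_segment (fun y _ => hφ y t) (fun y _ => hφ' y t)
    (second_derivative_symmetric (fun y => hφ y t) (hφ' x₀ t))
    fun y hy => by
      rw [← dist_eq_norm (φ'' y t), dist_comm]
      exact (hball y (hseg hy) t ht).le

end Taylor

theorem isLittleO_sub_taylor_two_real {φ φ' : ℝ → ℝ} {x₀ a : ℝ}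
    (hφ : ∀ᶠ x in 𝓝 x₀, HasDerivAt φ (φ' x) x) (hφ' : HasDerivAt φ' a x₀) :
    (fun x => φ x - φ x₀ - φ' x₀ * (x - x₀) - a * (x - x₀) ^ 2 / 2) =o[𝓝 x₀]
      fun x => (x - x₀) ^ 2 := by
  obtain ⟨δ, hδ, hball⟩ := Metric.eventually_nhds_iff_ball.1 hφ
  rw [← nhdsWithin_eq_nhds.2 (Metric.ball_mem_nhds x₀ hδ)]
  have hrem : (fun x => φ' x - φ' x₀ - a * (x - x₀)) =o[𝓝[Metric.ball x₀ δ] x₀]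
      fun x => (x - x₀) ^ 1 := by
    simpa [mul_comm a] using (hasDerivAt_iff_isLittleO.1 hφ').mono nhdsWithin_le_nhds
  have hψ : ∀ x ∈ Metric.ball x₀ δ, HasDerivWithinAt
      (fun x => φ x - φ' x₀ * (x - x₀) - a * (x - x₀) ^ 2 / 2)
      (φ' x - φ' x₀ - a * (x - x₀)) (Metric.ball x₀ δ) x := fun x hx =>
    ((((hball x hx).sub (((hasDerivAt_id x).sub_const x₀).const_mul (φ' x₀))).sub
      ((((hasDerivAt_id x).sub_const x₀).pow 2).const_mul a |>.div_const 2)).congr_deriv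
        (by simp; ring)).hasDerivWithinAt
  simpa [sub_right_comm _ (φ x₀)] using
    (convex_ball x₀ δ).isLittleO_pow_succ_real (Metric.mem_ball_self hδ) hψ hrem

namespace Asymptotics

variable {α F G : Type*} [NormedAddCommGroup F] [NormedSpace ℝ F]
  [SeminormedAddCommGroup G]
  {l : Filter α} {ψ : α → ℝ → F} {k : α → G} {a b : ℝ}

theorem IsBigOWith.intervalIntegral_prod {c : ℝ}
    (h : IsBigOWith c (l ×ˢ 𝓟 (uIcc a b)) (fun q => ψ q.1 q.2) fun q => k q.1) :
    IsBigOWith (c * |b - a|) l (fun x => ∫ t in a..b, ψ x t) k := by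
  rw [isBigOWith_iff, eventually_prod_principal_iff] at h
  refine isBigOWith_iff.2 (h.mono fun x hx => ?_)
  calc ‖∫ t in a..b, ψ x t‖ ≤ c * ‖k x‖ * |b - a| :=
        intervalIntegral.norm_integral_le_of_norm_le_const fun t ht => hx t (uIoc_subset_uIcc ht)
    _ = c * |b - a| * ‖k x‖ := by ring

theorem IsBigO.intervalIntegral_prod
    (h : (fun q => ψ q.1 q.2) =O[l ×ˢ 𝓟 (uIcc a b)] fun q => k q.1) :
    (fun x => ∫ t in a..b, ψ x t) =O[l] k :=
  let ⟨_, hc⟩ := h.isBigOWith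
  hc.intervalIntegral_prod.isBigO

theorem IsLittleO.intervalIntegral_prod
    (h : (fun q => ψ q.1 q.2) =o[l ×ˢ 𝓟 (uIcc a b)] fun q => k q.1) :
    (fun x => ∫ t in a..b, ψ x t) =o[l] k := by
  refine IsLittleO.of_isBigOWith fun c hc => ?_
  have hpos : 0 < |b - a| + 1 := by positivity
  refine (h.forall_isBigOWith (div_pos hc hpos)).intervalIntegral_prod.weaken ?_
  rw [div_mul_eq_mul_div, div_le_iff₀ hpos]
  nlinarith

end Asymptotics

theorem IsCompact.tendstoUniformlyOn_of_continuousOn_prod {α β γ : Type*} [TopologicalSpace α]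
    [TopologicalSpace β] [UniformSpace γ] {f : α → β → γ} {k : Set β} (hk : IsCompact k)
    (hf : ContinuousOn (Function.uncurry f) (univ ×ˢ k)) (x : α) :
    TendstoUniformlyOn f (f x) (𝓝 x) k := by
  intro u hu
  obtain ⟨v, hv, hvu⟩ := hk.mem_uniformity_of_prod hf (mem_univ x) (symm_le_uniformity hu)
  rw [nhdsWithin_univ] at hv
  exact mem_of_superset hv fun y hy t ht => hvu y hy t ht

theorem IsCompact.isBigO_one_prod_of_continuousOn {α β F : Type*} [TopologicalSpace β]
    [SeminormedAddCommGroup F] {l : Filter α} {u : β → F} {k : Set β} (hk : IsCompact k)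
    (hu : ContinuousOn u k) : (fun q : α × β => u q.2) =O[l ×ˢ 𝓟 k] fun _ => (1 : ℝ) := by
  obtain ⟨C, hC⟩ := hk.exists_bound_of_continuousOn hu
  refine isBigO_iff.2 ⟨C, eventually_prod_principal_iff.2 (Eventually.of_forall fun _ t ht => ?_)⟩
  simpa using hC t ht

section PartialFDeriv

variable {E T F : Type*} [NormedAddCommGroup E] [NormedSpace ℝ E] [NormedAddCommGroup T]
  [NormedSpace ℝ T] [NormedAddCommGroup F] [NormedSpace ℝ F] {f : E → T → F}
  {n m : WithTop ℕ∞}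

noncomputable def partialFDeriv (f : E → T → F) (x : E) (t : T) : E →L[ℝ] F :=
  fderiv ℝ (fun y => f y t) x

theorem contDiff_partialFDeriv (hf : ContDiff ℝ n fun q : E × T => f q.1 q.2)
    (hmn : m + 1 ≤ n) : ContDiff ℝ m fun q : E × T => partialFDeriv f q.1 q.2 :=
  ContDiff.fderiv (f := fun (q : E × T) (y : E) => f y q.2)
    (hf.comp (contDiff_snd.prodMk contDiff_fst.snd)) contDiff_fst hmn

theorem hasFDerivAt_partialFDeriv (hf : ContDiff ℝ n fun q : E × T => f q.1 q.2)
    (hn : n ≠ 0) (x : E) (t : T) : HasFDerivAt (f · t) (partialFDeriv f x t) x :=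
  ((hf.comp (contDiff_id.prodMk contDiff_const)).differentiable hn x).hasFDerivAt

end PartialFDeriv

section SquaredResidual

variable {E : Type*} [NormedAddCommGroup E] [NormedSpace ℝ E] {f : E → ℝ → ℝ} {f₀ : ℝ → ℝ}

noncomputable def sqResidualHessian (f : E → ℝ → ℝ) (f₀ : ℝ → ℝ) (θ : E) (t : ℝ) :
    E →L[ℝ] E →L[ℝ] ℝ :=
  (-2 * (f₀ t - f θ t)) • partialFDeriv (partialFDeriv f) θ t
    + (2 • partialFDeriv f θ t).smulRight (partialFDeriv f θ t)

theorem hasFDerivAt_sq_residual (hf : ContDiff ℝ 2 fun q : E × ℝ => f q.1 q.2) (θ : E) (t : ℝ) :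
    HasFDerivAt (fun θ => (f₀ t - f θ t) ^ 2) ((-2 * (f₀ t - f θ t)) • partialFDeriv f θ t) θ :=
  ((hasFDerivAt_partialFDeriv hf two_ne_zero θ t).const_sub (f₀ t)).pow 2 |>.congr_fderiv <| by
    ext v
    simp

theorem hasFDerivAt_sq_residual_fderiv (hf : ContDiff ℝ 2 fun q : E × ℝ => f q.1 q.2) (θ : E)
    (t : ℝ) :
    HasFDerivAt (fun θ => (-2 * (f₀ t - f θ t)) • partialFDeriv f θ t)
      (sqResidualHessian f f₀ θ t) θ := by
  have hc : HasFDerivAt (fun θ => -2 * (f₀ t - f θ t)) (2 • partialFDeriv f θ t) θ :=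
    ((hasFDerivAt_partialFDeriv hf two_ne_zero θ t).const_sub (f₀ t)).const_mul (-2)
      |>.congr_fderiv (by ext v; simp)
  exact hc.smul (hasFDerivAt_partialFDeriv (contDiff_partialFDeriv hf (m := 1) le_rfl)
    one_ne_zero θ t)

theorem continuousOn_sqResidualHessian (hf : ContDiff ℝ 2 fun q : E × ℝ => f q.1 q.2)
    {s : Set ℝ} (hf₀ : ContinuousOn f₀ s) :
    ContinuousOn (Function.uncurry (sqResidualHessian f f₀)) (univ ×ˢ s) := by
  have hD1 := contDiff_partialFDeriv hf (m := 1) le_rfl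
  have hD2 := (contDiff_partialFDeriv hD1 (m := 0) le_rfl).continuous
  have hr : ContinuousOn (fun q : E × ℝ => -2 * (f₀ q.2 - f q.1 q.2)) (univ ×ˢ s) :=
    continuousOn_const.mul
      ((hf₀.comp continuousOn_snd fun _ hq => (mem_prod.1 hq).2).sub hf.continuous.continuousOn)
  have hrank : Continuous fun q : E × ℝ =>
      (2 • partialFDeriv f q.1 q.2).smulRight (partialFDeriv f q.1 q.2) :=
    ((ContinuousLinearMap.smulRightL ℝ E (E →L[ℝ] ℝ)).continuous.comp
      (hD1.continuous.const_smul 2)).clm_apply hD1.continuous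
  exact (hr.smul hD2.continuousOn).add hrank.continuousOn

theorem sqResidualHessian_apply_self_half (hf : ContDiff ℝ 2 fun q : E × ℝ => f q.1 q.2)
    (θ : E) (t : ℝ) (v : E) :
    2⁻¹ * sqResidualHessian f f₀ θ t v v = partialFDeriv f θ t v ^ 2
      - fderiv ℝ (fun θ' => partialFDeriv f θ' t v) θ v * (f₀ t - f θ t) := by
  rw [((hasFDerivAt_partialFDeriv (contDiff_partialFDeriv hf (m := 1) le_rfl) one_ne_zero θ t
    ).clm_apply (hasFDerivAt_const v θ)).fderiv]
  simp [sqResidualHessian]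
  ring

end SquaredResidual

section IntegratedSquaredResidual

variable {E : Type*} [NormedAddCommGroup E] [NormedSpace ℝ E] {f : E → ℝ → ℝ} {f₀ g : ℝ → ℝ}
  {θ₀ : E}

theorem integral_sq_residual_taylor_remainder (hf : ContDiff ℝ 2 fun q : E × ℝ => f q.1 q.2)
    (hf₀ : ContinuousOn f₀ (Icc 0 1)) (hg : ContinuousOn g (Icc 0 1))
    (hstat : ∀ v, ∫ t in (0 : ℝ)..1, partialFDeriv f θ₀ t v * (f₀ t - f θ₀ t) * g t = 0)
    (θ : E) :
    ∫ t in (0 : ℝ)..1, ((f₀ t - f θ t) ^ 2 - (f₀ t - f θ₀ t) ^ 2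
        - ((-2 * (f₀ t - f θ₀ t)) • partialFDeriv f θ₀ t) (θ - θ₀)
        - (2 : ℝ)⁻¹ • sqResidualHessian f f₀ θ₀ t (θ - θ₀) (θ - θ₀)) * g t
      = (∫ t in (0 : ℝ)..1, (f₀ t - f θ t) ^ 2 * g t)
        - (∫ t in (0 : ℝ)..1, (f₀ t - f θ₀ t) ^ 2 * g t)
        - ∫ t in (0 : ℝ)..1, (partialFDeriv f θ₀ t (θ - θ₀) ^ 2
            - fderiv ℝ (fun θ' => partialFDeriv f θ' t (θ - θ₀)) θ₀ (θ - θ₀)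
              * (f₀ t - f θ₀ t)) * g t := by
  set v := θ - θ₀
  have hint : ∀ u : ℝ → ℝ, ContinuousOn u (Icc 0 1) →
      IntervalIntegrable (fun t => u t * g t) MeasureTheory.volume 0 1 :=
    fun u hu => (hu.mul hg).intervalIntegrable_of_Icc zero_le_one
  have hres : ∀ θ, ContinuousOn (fun t => (f₀ t - f θ t)) (Icc 0 1) := fun θ =>
    hf₀.sub (hf.continuous.comp (Continuous.prodMk_right θ)).continuousOn
  have hD1 : Continuous fun t => partialFDeriv f θ₀ t :=
    (contDiff_partialFDeriv hf (m := 1) le_rfl).continuous.comp (Continuous.prodMk_right θ₀)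
  have hlin : ∫ t in (0 : ℝ)..1, ((-2 * (f₀ t - f θ₀ t)) • partialFDeriv f θ₀ t) v * g t = 0 := by
    calc _ = ∫ t in (0 : ℝ)..1, -2 * (partialFDeriv f θ₀ t v * (f₀ t - f θ₀ t) * g t) :=
          intervalIntegral.integral_congr fun t _ => by
            simp only [FunLike.coe_smul, Pi.smul_apply, smul_eq_mul]
            ring
      _ = 0 := by rw [intervalIntegral.integral_const_mul, hstat, mul_zero]
  have hquad : ∫ t in (0 : ℝ)..1, (2 : ℝ)⁻¹ • sqResidualHessian f f₀ θ₀ t v v * g t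
      = ∫ t in (0 : ℝ)..1, (partialFDeriv f θ₀ t v ^ 2
          - fderiv ℝ (fun θ' => partialFDeriv f θ' t v) θ₀ v * (f₀ t - f θ₀ t)) * g t :=
    intervalIntegral.integral_congr fun t _ => by
      rw [smul_eq_mul, sqResidualHessian_apply_self_half hf]
  have i1 := hint (fun t => (f₀ t - f θ t) ^ 2) ((hres θ).pow 2)
  have i2 := hint (fun t => (f₀ t - f θ₀ t) ^ 2) ((hres θ₀).pow 2)
  have i3 := hint (fun t => ((-2 * (f₀ t - f θ₀ t)) • partialFDeriv f θ₀ t) v)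
    (((continuousOn_const.mul (hres θ₀)).smul hD1.continuousOn).clm_apply continuousOn_const)
  have hH : ContinuousOn (sqResidualHessian f f₀ θ₀) (Icc 0 1) :=
    (continuousOn_sqResidualHessian hf hf₀).uncurry_left θ₀ (mem_univ θ₀)
  have i4 := hint (fun t => (2 : ℝ)⁻¹ • sqResidualHessian f f₀ θ₀ t v v)
    (continuousOn_const.fun_smul ((hH.clm_apply continuousOn_const).clm_apply continuousOn_const))
  rw [← hquad]
  simp only [sub_mul]
  rw [intervalIntegral.integral_sub ((i1.sub i2).sub i3) i4, intervalIntegral.integral_sub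
    (i1.sub i2) i3, intervalIntegral.integral_sub i1 i2, hlin, sub_zero]

theorem isLittleO_integral_sq_residual_sub_taylor
    (hf : ContDiff ℝ 2 fun q : E × ℝ => f q.1 q.2)
    (hf₀ : ContinuousOn f₀ (Icc 0 1)) (hg : ContinuousOn g (Icc 0 1))
    (hstat : ∀ v, ∫ t in (0 : ℝ)..1, partialFDeriv f θ₀ t v * (f₀ t - f θ₀ t) * g t = 0) :
    (fun θ => (∫ t in (0 : ℝ)..1, (f₀ t - f θ t) ^ 2 * g t)
        - (∫ t in (0 : ℝ)..1, (f₀ t - f θ₀ t) ^ 2 * g t)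
        - ∫ t in (0 : ℝ)..1, (partialFDeriv f θ₀ t (θ - θ₀) ^ 2
            - fderiv ℝ (fun θ' => partialFDeriv f θ' t (θ - θ₀)) θ₀ (θ - θ₀)
              * (f₀ t - f θ₀ t)) * g t)
      =o[𝓝 θ₀] fun θ => ‖θ - θ₀‖ ^ 2 := by
  have htaylor := isLittleO_sub_taylor_two_of_tendstoUniformlyOn
    (hasFDerivAt_sq_residual (f₀ := f₀) hf) (hasFDerivAt_sq_residual_fderiv hf)
    (isCompact_Icc.tendstoUniformlyOn_of_continuousOn_prod
      (continuousOn_sqResidualHessian hf hf₀) θ₀)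
  have hint := htaylor.mul_isBigO (isCompact_Icc.isBigO_one_prod_of_continuousOn hg)
  rw [← uIcc_of_le zero_le_one] at hint
  refine (IsLittleO.intervalIntegral_prod ?_).congr
    (integral_sq_residual_taylor_remainder hf hf₀ hg hstat) fun _ => rfl
  simpa only [mul_one] using hint

theorem isBigO_integral_sq_residual_hessian
    (hf : ContDiff ℝ 2 fun q : E × ℝ => f q.1 q.2)
    (hf₀ : ContinuousOn f₀ (Icc 0 1)) (hg : ContinuousOn g (Icc 0 1)) :
    (fun θ => ∫ t in (0 : ℝ)..1, (partialFDeriv f θ₀ t (θ - θ₀) ^ 2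
        - fderiv ℝ (fun θ' => partialFDeriv f θ' t (θ - θ₀)) θ₀ (θ - θ₀)
          * (f₀ t - f θ₀ t)) * g t)
      =O[𝓝 θ₀] fun θ => ‖θ - θ₀‖ ^ 2 := by
  refine IsBigO.intervalIntegral_prod ?_
  rw [uIcc_of_le zero_le_one]
  have hH := (isCompact_Icc.isBigO_one_prod_of_continuousOn (l := 𝓝 θ₀)
    (F := E →L[ℝ] E →L[ℝ] ℝ)
    ((continuousOn_sqResidualHessian hf hf₀).uncurry_left θ₀ (mem_univ θ₀))).norm_left.mul
      (isBigO_refl (fun q : E × ℝ => ‖q.1 - θ₀‖ ^ 2) _)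
  have hnorm : (fun q : E × ℝ => sqResidualHessian f f₀ θ₀ q.2 (q.1 - θ₀) (q.1 - θ₀))
      =O[𝓝 θ₀ ×ˢ 𝓟 (Icc 0 1)] fun q => ‖sqResidualHessian f f₀ θ₀ q.2‖ * ‖q.1 - θ₀‖ ^ 2 :=
    IsBigO.of_norm_le fun q => by
      simpa [sq, mul_assoc] using (sqResidualHessian f f₀ θ₀ q.2).le_opNorm₂ (q.1 - θ₀) (q.1 - θ₀)
  have hquad := hnorm.trans (by simpa only [one_mul] using hH)
  refine ((hquad.const_mul_left 2⁻¹).mul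
    (isCompact_Icc.isBigO_one_prod_of_continuousOn hg)).congr (fun q => ?_) fun _ => mul_one _
  rw [sqResidualHessian_apply_self_half hf]

end IntegratedSquaredResidual

theorem isBigO_norm_fst_sub_sq {E F : Type*} [NormedAddCommGroup E] [NormedAddCommGroup F]
    {l : Filter (E × F)} (a : E) (b : F) :
    (fun γ : E × F => ‖γ.1 - a‖ ^ 2) =O[l] fun γ => ‖γ - (a, b)‖ ^ 2 :=
  isBigO_of_le _ fun γ => by
    simpa using pow_le_pow_left₀ (norm_nonneg _) (norm_fst_le (γ - (a, b))) 2

theorem isBigO_sub_snd_sq {E : Type*} [NormedAddCommGroup E] {l : Filter (E × ℝ)} (a : E)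
    (b : ℝ) : (fun γ : E × ℝ => (γ.2 - b) ^ 2) =O[l] fun γ => ‖γ - (a, b)‖ ^ 2 :=
  isBigO_of_le _ fun γ => by
    rw [Real.norm_of_nonneg (sq_nonneg _), norm_pow, norm_norm, ← sq_abs]
    simpa using pow_le_pow_left₀ (abs_nonneg _) (norm_snd_le (γ - (a, b))) 2

theorem isLittleO_half_log_add_div_sub_taylor {σ : ℝ} (hσ : 0 < σ) :
    (fun s => Real.log s / 2 + σ / (2 * s) - (Real.log σ / 2 + 1 / 2) - (s - σ) ^ 2 / (4 * σ ^ 2))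
      =o[𝓝 σ] fun s => (s - σ) ^ 2 := by
  have hφ : ∀ᶠ s in 𝓝 σ, HasDerivAt (fun s => Real.log s / 2 + σ / (2 * s))
      ((s - σ) / (2 * s ^ 2)) s := by
    filter_upwards [eventually_gt_nhds hσ] with s hs
    refine ((Real.hasDerivAt_log hs.ne').div_const 2 |>.add
      ((hasDerivAt_const s σ).div ((hasDerivAt_id' s).const_mul 2) (by positivity)))
      |>.congr_deriv ?_
    rw [eq_div_iff (by positivity)]
    field_simp
    ring
  have hφ' : HasDerivAt (fun s => (s - σ) / (2 * s ^ 2)) (1 / (2 * σ ^ 2)) σ := by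
    refine (((hasDerivAt_id' σ).sub_const σ).div ((hasDerivAt_pow 2 σ).const_mul 2)
      (by positivity)).congr_deriv ?_
    field_simp
    ring
  have hhalf : σ / (2 * σ) = 1 / 2 := by field_simp
  refine (isLittleO_sub_taylor_two_real hφ hφ').congr (fun s => ?_) fun _ => rfl
  rw [hhalf, sub_self, zero_div, zero_mul, sub_zero]
  ring

theorem isLittleO_gaussianKL_sub_quadratic {E : Type*} [NormedAddCommGroup E] (F Q : E → ℝ)
    {θ₀ : E} {c σ : ℝ} (hσ : 0 < σ) (hσc : σ = c + F θ₀)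
    (hF : (fun θ => F θ - F θ₀ - Q (θ - θ₀)) =o[𝓝 θ₀] fun θ => ‖θ - θ₀‖ ^ 2)
    (hQ : (fun θ => Q (θ - θ₀)) =O[𝓝 θ₀] fun θ => ‖θ - θ₀‖ ^ 2) :
    (fun γ : E × ℝ =>
        (Real.log √γ.2 - Real.log √σ + (c + F γ.1) / (2 * γ.2) - (c + F θ₀) / (2 * σ))
          - (1 / (2 * σ) * Q (γ.1 - θ₀) + (γ.2 - σ) ^ 2 / (4 * σ ^ 2)))
      =o[𝓝 (θ₀, σ)] fun γ => ‖γ - (θ₀, σ)‖ ^ 2 := by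
  obtain rfl : c = σ - F θ₀ := by linarith
  have hfst : Tendsto Prod.fst (𝓝 (θ₀, σ)) (𝓝 θ₀) := continuous_fst.tendsto _
  have hinv : Tendsto (fun γ : E × ℝ => (2 * γ.2)⁻¹) (𝓝 (θ₀, σ)) (𝓝 (2 * σ)⁻¹) :=
    ((continuous_snd.tendsto _).const_mul 2).inv₀ (by positivity)
  have hscale := ((isLittleO_half_log_add_div_sub_taylor hσ).comp_tendsto
    (continuous_snd.tendsto (θ₀, σ))).trans_isBigO (isBigO_sub_snd_sq θ₀ σ)
  have hcross := ((hQ.comp_tendsto hfst).trans (isBigO_norm_fst_sub_sq θ₀ σ)).mul_isLittleO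
    ((isLittleO_one_iff ℝ).2 (tendsto_sub_nhds_zero_iff.2 hinv))
  have hrem := ((hF.comp_tendsto hfst).trans_isBigO (isBigO_norm_fst_sub_sq θ₀ σ)).mul_isBigO
    (hinv.isBigO_one ℝ)
  simp only [mul_one] at hcross hrem
  refine EventuallyEq.trans_isLittleO ?_ ((hscale.add hcross).add hrem)
  filter_upwards [(continuous_snd.tendsto (θ₀, σ)).eventually (eventually_gt_nhds hσ)]
    with γ hγ
  simp only [Function.comp_apply]
  rw [Real.log_sqrt hγ.le, Real.log_sqrt hσ.le]
  field_simp
  ring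

theorem statement4_general
    (p : ℕ) (f : EuclideanSpace ℝ (Fin p) → ℝ → ℝ) (f₀ g : ℝ → ℝ)
    (σ0sq : ℝ)
    (hf : ContDiff ℝ 2 (fun q : EuclideanSpace ℝ (Fin p) × ℝ => f q.1 q.2))
    (hf₀ : ContinuousOn f₀ (Icc 0 1)) (hgc : ContinuousOn g (Icc 0 1))
    (θ₀ : EuclideanSpace ℝ (Fin p)) (σstarsq : ℝ) (hσstar : 0 < σstarsq)
    -- stationarity of `γ₀ = (θ₀, σ*²)`
    (hstat : ∀ v : EuclideanSpace ℝ (Fin p),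
      (∫ t in (0:ℝ)..1, (fderiv ℝ (fun θ => f θ t) θ₀ v) * (f₀ t - f θ₀ t) * g t) = 0)
    (hsigma : σstarsq = σ0sq + ∫ t in (0:ℝ)..1, (f₀ t - f θ₀ t)^2 * g t)
    -- the Kullback–Leibler function `γ = (θ, σ²) ↦ −P₀ log(p_γ/p_{γ₀})`
    (KL : EuclideanSpace ℝ (Fin p) × ℝ → ℝ)
    (hKL : ∀ θ, ∀ s > (0:ℝ), KL (θ, s) =
      Real.log (Real.sqrt s) - Real.log (Real.sqrt σstarsq)
        + (σ0sq + ∫ t in (0:ℝ)..1, (f₀ t - f θ t)^2 * g t) / (2 * s)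
        - (σ0sq + ∫ t in (0:ℝ)..1, (f₀ t - f θ₀ t)^2 * g t) / (2 * σstarsq)) :
    (fun γ : EuclideanSpace ℝ (Fin p) × ℝ =>
        KL γ -
          ((1 / (2 * σstarsq)) *
              (∫ t in (0:ℝ)..1,
                ((fderiv ℝ (fun θ => f θ t) θ₀ (γ.1 - θ₀))^2 -
                  (fderiv ℝ (fun θ => fderiv ℝ (fun θ' => f θ' t) θ (γ.1 - θ₀)) θ₀ (γ.1 - θ₀))
                    * (f₀ t - f θ₀ t)) * g t)
            + (γ.2 - σstarsq)^2 / (4 * σstarsq^2)))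
      =o[nhds (θ₀, σstarsq)]
      (fun γ : EuclideanSpace ℝ (Fin p) × ℝ => ‖γ - (θ₀, σstarsq)‖^2) := by
  refine EventuallyEq.trans_isLittleO ?_ (isLittleO_gaussianKL_sub_quadratic
    (fun θ => ∫ t in (0 : ℝ)..1, (f₀ t - f θ t) ^ 2 * g t)
    (fun v => ∫ t in (0 : ℝ)..1, (partialFDeriv f θ₀ t v ^ 2
      - fderiv ℝ (fun θ => partialFDeriv f θ t v) θ₀ v * (f₀ t - f θ₀ t)) * g t)
    hσstar hsigma (isLittleO_integral_sq_residual_sub_taylor hf hf₀ hgc hstat)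
    (isBigO_integral_sq_residual_hessian hf hf₀ hgc))
  filter_upwards [(continuous_snd.tendsto (θ₀, σstarsq)).eventually (eventually_gt_nhds hσstar)]
    with γ hγ
  rw [← hKL γ.1 γ.2 hγ]
  rfl

/-- Second-order Taylor expansion of the misspecified
Kullback–Leibler function `γ ↦ −P₀ log(p_γ/p_{γ₀})` around `γ₀ = (θ₀, σ*²)`:
`−P₀ log(p_γ/p_{γ₀}) = (1/2)(γ − γ₀)ᵀ V_{γ₀} (γ − γ₀) + o(‖γ − γ₀‖²)`,
where `V_{γ₀} = diag(σ*⁻² V_{θ₀}, σ*⁻⁴/2)` with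
`V_{θ₀} = ∫₀¹ (ḟ_{θ₀}ᵀḟ_{θ₀} − ∂/∂θ[ḟ_θᵀ(f₀ − f_{θ₀})]|_{θ₀}) g dt`,
and `γ₀` satisfies the stationarity conditions
`∫₀¹ ḟ_{θ₀}ᵀ(f₀ − f_{θ₀}) g = 0`, `σ*² = σ₀² + ∫₀¹ |f₀ − f_{θ₀}|² g`.
Here `−P₀ log(p_γ/p_{γ₀})` is expressed by its closed form
`log σ − log σ* + (2σ²)⁻¹(σ₀² + ∫(f₀−f_θ)²g) − (2σ*²)⁻¹(σ₀² + ∫(f₀−f_{θ₀})²g)`. -/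
theorem statement4
    (p : ℕ) (f : EuclideanSpace ℝ (Fin p) → ℝ → ℝ) (f₀ g : ℝ → ℝ)
    (σ0sq : ℝ) (hσ0 : 0 < σ0sq)
    (hf : ContDiff ℝ 2 (fun q : EuclideanSpace ℝ (Fin p) × ℝ => f q.1 q.2))
    (hf₀ : ContinuousOn f₀ (Icc 0 1)) (hgc : ContinuousOn g (Icc 0 1))
    (hg : ∀ t ∈ Icc (0:ℝ) 1, 0 ≤ g t)
    (θ₀ : EuclideanSpace ℝ (Fin p)) (σstarsq : ℝ) (hσstar : 0 < σstarsq)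
    -- stationarity of `γ₀ = (θ₀, σ*²)`
    (hstat : ∀ v : EuclideanSpace ℝ (Fin p),
      (∫ t in (0:ℝ)..1, (fderiv ℝ (fun θ => f θ t) θ₀ v) * (f₀ t - f θ₀ t) * g t) = 0)
    (hsigma : σstarsq = σ0sq + ∫ t in (0:ℝ)..1, (f₀ t - f θ₀ t)^2 * g t)
    -- the Kullback–Leibler function `γ = (θ, σ²) ↦ −P₀ log(p_γ/p_{γ₀})`
    (KL : EuclideanSpace ℝ (Fin p) × ℝ → ℝ)
    (hKL : ∀ θ, ∀ s > (0:ℝ), KL (θ, s) =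
      Real.log (Real.sqrt s) - Real.log (Real.sqrt σstarsq)
        + (σ0sq + ∫ t in (0:ℝ)..1, (f₀ t - f θ t)^2 * g t) / (2 * s)
        - (σ0sq + ∫ t in (0:ℝ)..1, (f₀ t - f θ₀ t)^2 * g t) / (2 * σstarsq)) :
    (fun γ : EuclideanSpace ℝ (Fin p) × ℝ =>
        KL γ -
          ((1 / (2 * σstarsq)) *
              (∫ t in (0:ℝ)..1,
                ((fderiv ℝ (fun θ => f θ t) θ₀ (γ.1 - θ₀))^2 -
                  (fderiv ℝ (fun θ => fderiv ℝ (fun θ' => f θ' t) θ (γ.1 - θ₀)) θ₀ (γ.1 - θ₀))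
                    * (f₀ t - f θ₀ t)) * g t)
            + (γ.2 - σstarsq)^2 / (4 * σstarsq^2)))
      =o[nhds (θ₀, σstarsq)]
      (fun γ : EuclideanSpace ℝ (Fin p) × ℝ => ‖γ - (θ₀, σstarsq)‖^2) :=
  statement4_general p f f₀ g σ0sq hf hf₀ hgc θ₀ σstarsq hσstar hstat hsigma KL hKL
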